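/- arXiv:math/0607675 — 7 statements merged into one kernel-verified Lean document; each statement's English description precedes it below -/
import Mathlib

section
/- Let n : ℕ, let I ∈ Matrix (Fin n) (Fin n) ℤ be symmetric with det I ≠ 0, and let K : Fin n → ℤ be a characteristic covector for I. Then for every V : Fin n → ℤ, setting K' = K + 2 • I.mulVec V, there exists an integer m such that K' ⬝ᵥ I⁻¹.mulVec K' - K ⬝ᵥ I⁻¹.mulVec K = 8 * m, where I⁻¹ is the rational inverse of I and the computation takes place in ℚ. -/
open Matrix

/-- `K` is a characteristic covector for the integer matrix `I`. -/
def IsCharacteristic (n : ℕ) (I : Matrix (Fin n) (Fin n) ℤ) (K : Fin n → ℤ) : Prop :=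
  ∀ v : Fin n → ℤ, K ⬝ᵥ v ≡ v ⬝ᵥ I.mulVec v [ZMOD 2]

lemma aux_sq_diff (n : ℕ) (A : Matrix (Fin n) (Fin n) ℚ) (hA : A.IsSymm)
    (hdet : IsUnit A.det) (K V : Fin n → ℚ) :
    (K + (2 : ℚ) • A.mulVec V) ⬝ᵥ A⁻¹.mulVec (K + (2 : ℚ) • A.mulVec V) - K ⬝ᵥ A⁻¹.mulVec K
      = 4 * (K ⬝ᵥ V + V ⬝ᵥ A.mulVec V) := by
  have h1 : A⁻¹.mulVec (A.mulVec V) = V := by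
    rw [mulVec_mulVec, nonsing_inv_mul A hdet, one_mulVec]
  have h2 : (A.mulVec V) ⬝ᵥ A⁻¹.mulVec K = V ⬝ᵥ K := by
    rw [dotProduct_mulVec, ← mulVec_transpose, mulVec_mulVec, transpose_nonsing_inv,
      hA.eq, nonsing_inv_mul A hdet, one_mulVec]
  have h3 : (A.mulVec V) ⬝ᵥ V = V ⬝ᵥ A.mulVec V := dotProduct_comm _ _
  simp only [mulVec_add, add_dotProduct, dotProduct_add, mulVec_smul, smul_dotProduct,
    dotProduct_smul, h1, h2, h3, smul_eq_mul, dotProduct_comm V K]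
  ring

/-- For a characteristic covector `K` of a symmetric integer matrix `I` with nonzero
determinant, and `K' = K + 2 • I.mulVec V`, the difference of squares `K'² - K²`
(computed in `ℚ` with the rational inverse of `I`) is an integer multiple of `8`. -/
theorem square_difference_div_eight (n : ℕ) (I : Matrix (Fin n) (Fin n) ℤ)
    (hI : I.IsSymm) (hdet : I.det ≠ 0) (K : Fin n → ℤ) (hK : IsCharacteristic n I K)
    (V : Fin n → ℤ) :
    ∃ m : ℤ,
      (fun i => (((K + 2 • I.mulVec V) i : ℤ) : ℚ)) ⬝ᵥ
          (I.map ((↑) : ℤ → ℚ))⁻¹.mulVec (fun i => (((K + 2 • I.mulVec V) i : ℤ) : ℚ))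
        - (fun i => ((K i : ℤ) : ℚ)) ⬝ᵥ
          (I.map ((↑) : ℤ → ℚ))⁻¹.mulVec (fun i => ((K i : ℤ) : ℚ))
        = 8 * (m : ℚ) := by
  set A := I.map ((↑) : ℤ → ℚ) with hAdef
  have hAsymm : A.IsSymm := by
    unfold Matrix.IsSymm
    rw [hAdef, ← Matrix.transpose_map, hI.eq]
  have hAdet : IsUnit A.det := by
    rw [hAdef, show I.map ((↑) : ℤ → ℚ) = (Int.castRingHom ℚ).mapMatrix I from rfl,
      ← RingHom.map_det]
    simpa using hdet
  set Kq : Fin n → ℚ := fun i => ((K i : ℤ) : ℚ) with hKq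
  set Vq : Fin n → ℚ := fun i => ((V i : ℤ) : ℚ) with hVq
  have hcast : (fun i => (((K + 2 • I.mulVec V) i : ℤ) : ℚ))
      = Kq + (2 : ℚ) • A.mulVec Vq := by
    funext i
    simp only [Pi.add_apply, Pi.smul_apply, hKq, hVq, hAdef, Matrix.mulVec, dotProduct,
      Matrix.map_apply, smul_eq_mul]
    push_cast [Finset.mul_sum, nsmul_eq_mul]
    ring
  rw [hcast, aux_sq_diff n A hAsymm hAdet Kq Vq]
  have hint : Kq ⬝ᵥ Vq + Vq ⬝ᵥ A.mulVec Vq = ((K ⬝ᵥ V + V ⬝ᵥ I.mulVec V : ℤ) : ℚ) := by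
    simp only [hKq, hVq, hAdef, Matrix.mulVec, dotProduct, Matrix.map_apply]
    push_cast [Finset.mul_sum, Int.cast_sum]
    ring
  obtain ⟨c, hc⟩ : (2 : ℤ) ∣ (V ⬝ᵥ I.mulVec V - K ⬝ᵥ V) := (hK V).dvd
  refine ⟨c + K ⬝ᵥ V, ?_⟩
  rw [hint]
  have : (K ⬝ᵥ V + V ⬝ᵥ I.mulVec V : ℤ) = 2 * (c + K ⬝ᵥ V) := by linarith
  rw [this]
  push_cast
  ring
end

section
/- Let n : ℕ with n ≥ 1, let I ∈ Matrix (Fin n) (Fin n) ℤ be symmetric and negative definite, and let K : Fin n → ℤ. Then the function V ↦ (K + 2 • I.mulVec V) ⬝ᵥ I⁻¹.mulVec (K + 2 • I.mulVec V), from (Fin n → ℤ) to ℚ (computed with the rational inverse I⁻¹), attains a maximum: there exists V₀ : Fin n → ℤ such that for all V : Fin n → ℤ, (K + 2 • I.mulVec V) ⬝ᵥ I⁻¹.mulVec (K + 2 • I.mulVec V) ≤ (K + 2 • I.mulVec V₀) ⬝ᵥ I⁻¹.mulVec (K + 2 • I.mulVec V₀). -/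
open Matrix

/-- For a symmetric negative definite integer matrix `I` (with `n ≥ 1`) and any integer
vector `K`, the rational-valued function `V ↦ (K + 2 I V)² = (K + 2 • I.mulVec V) ⬝ᵥ
I⁻¹.mulVec (K + 2 • I.mulVec V)` on integer vectors `V` attains a maximum. -/
theorem square_attains_max_on_orbit (n : ℕ) (hn : 1 ≤ n) (I : Matrix (Fin n) (Fin n) ℤ)
    (hI : I.IsSymm)
    (hneg : ∀ v : Fin n → ℚ, v ≠ 0 → v ⬝ᵥ (I.map ((↑) : ℤ → ℚ)).mulVec v < 0)
    (K : Fin n → ℤ) :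
    ∃ V₀ : Fin n → ℤ, ∀ V : Fin n → ℤ,
      (fun i => (((K + 2 • I.mulVec V) i : ℤ) : ℚ)) ⬝ᵥ
          (I.map ((↑) : ℤ → ℚ))⁻¹.mulVec (fun i => (((K + 2 • I.mulVec V) i : ℤ) : ℚ))
        ≤ (fun i => (((K + 2 • I.mulVec V₀) i : ℤ) : ℚ)) ⬝ᵥ
          (I.map ((↑) : ℤ → ℚ))⁻¹.mulVec (fun i => (((K + 2 • I.mulVec V₀) i : ℤ) : ℚ)) := by
  classical
  have hdet : (I.map ((↑) : ℤ → ℚ)).det ≠ 0 := by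
    intro h
    obtain ⟨v, hv, hmul⟩ := (Matrix.exists_mulVec_eq_zero_iff).2 h
    have := hneg v hv
    rw [hmul, dotProduct_zero] at this
    exact lt_irrefl 0 this
  set A : Matrix (Fin n) (Fin n) ℚ := I.map ((↑) : ℤ → ℚ) with hA
  have hdetc : A.det = ((I.det : ℤ) : ℚ) := ((Int.castRingHom ℚ).map_det I).symm
  -- the inverse form is nonpositive
  have hnonpos : ∀ w : Fin n → ℚ, w ⬝ᵥ A⁻¹.mulVec w ≤ 0 := by
    intro w
    have hw : A.mulVec (A⁻¹.mulVec w) = w := by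
      rw [Matrix.mulVec_mulVec, Matrix.mul_nonsing_inv _ (isUnit_iff_ne_zero.2 hdet),
        Matrix.one_mulVec]
    by_cases h0 : A⁻¹.mulVec w = 0
    · rw [h0, dotProduct_zero]
    · have := hneg _ h0
      calc w ⬝ᵥ A⁻¹.mulVec w = (A⁻¹.mulVec w) ⬝ᵥ A.mulVec (A⁻¹.mulVec w) := by
            rw [hw, dotProduct_comm]
        _ ≤ 0 := le_of_lt this
  -- express the value as an integer over det
  have key : ∀ w : Fin n → ℤ,
      (fun i => ((w i : ℤ) : ℚ)) ⬝ᵥ A⁻¹.mulVec (fun i => ((w i : ℤ) : ℚ))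
        = ((w ⬝ᵥ I.adjugate.mulVec w : ℤ) : ℚ) / ((I.det : ℤ) : ℚ) := by
    intro w
    have hAinv : A⁻¹ = (A.det)⁻¹ • A.adjugate := by
      rw [Matrix.inv_def, Ring.inverse_eq_inv']
    have hadj : A.adjugate = (I.adjugate).map ((↑) : ℤ → ℚ) :=
      ((Int.castRingHom ℚ).map_adjugate I).symm
    have hcast : (I.adjugate.map ((↑) : ℤ → ℚ)).mulVec (fun i => ((w i : ℤ) : ℚ))
        = fun i => ((I.adjugate.mulVec w i : ℤ) : ℚ) := by
      funext i
      exact ((Int.castRingHom ℚ).map_mulVec I.adjugate w i).symm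
    rw [hAinv, hadj, Matrix.smul_mulVec, dotProduct_smul, hcast, hdetc]
    rw [div_eq_inv_mul]
    congr 1
    exact ((Int.castRingHom ℚ).map_dotProduct w _).symm
  -- integer values and boundedness
  set D : ℤ := I.det with hD
  have hD0 : (D : ℚ) ≠ 0 := by rw [hdetc] at hdet; exact_mod_cast hdet
  set s : ℤ := if 0 ≤ D then 1 else -1 with hs
  set m : (Fin n → ℤ) → ℤ := fun V =>
    s * ((K + 2 • I.mulVec V) ⬝ᵥ I.adjugate.mulVec (K + 2 • I.mulVec V)) with hm
  have hval : ∀ V : Fin n → ℤ,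
      (fun i => (((K + 2 • I.mulVec V) i : ℤ) : ℚ)) ⬝ᵥ
          A⁻¹.mulVec (fun i => (((K + 2 • I.mulVec V) i : ℤ) : ℚ))
        = ((m V : ℤ) : ℚ) / |(D : ℚ)| := by
    intro V
    rw [key]
    simp only [hm]
    rcases le_or_gt 0 D with h | h
    · have hs1 : s = 1 := if_pos h
      simp only [hs1, one_mul, abs_of_nonneg (show (0:ℚ) ≤ (D:ℚ) by exact_mod_cast h)]
    · have hs1 : s = -1 := if_neg (not_le.2 h)
      simp only [hs1, abs_of_neg (show (D:ℚ) < 0 by exact_mod_cast h)]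
      rw [show ((-1 * ((K + 2 • I.mulVec V) ⬝ᵥ I.adjugate.mulVec (K + 2 • I.mulVec V)) : ℤ) : ℚ)
          = -(((K + 2 • I.mulVec V) ⬝ᵥ I.adjugate.mulVec (K + 2 • I.mulVec V) : ℤ) : ℚ) by
        push_cast; ring]
      rw [neg_div_neg_eq]
  have habs : 0 < |(D : ℚ)| := abs_pos.2 hD0
  -- m V ≤ 0
  have hmle : ∀ V, m V ≤ 0 := by
    intro V
    have h1 := hnonpos (fun i => (((K + 2 • I.mulVec V) i : ℤ) : ℚ))
    rw [hval V] at h1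
    have h2 : ((m V : ℤ) : ℚ) ≤ 0 := by
      rcases div_nonpos_iff.1 h1 with ⟨_, h3⟩ | ⟨h3, _⟩
      · exact absurd h3 (not_le.2 habs)
      · exact h3
    exact_mod_cast h2
  obtain ⟨z₀, ⟨V₀, hV₀⟩, hmax⟩ := Int.exists_greatest_of_bdd (P := fun z => ∃ V, m V = z)
    ⟨0, fun z hz => by obtain ⟨V, hV⟩ := hz; exact hV ▸ hmle V⟩ ⟨m 0, 0, rfl⟩
  refine ⟨V₀, fun V => ?_⟩
  rw [hval V, hval V₀, hV₀]
  have hle : m V ≤ z₀ := hmax _ ⟨V, rfl⟩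
  exact (div_le_div_iff_of_pos_right habs).2 (by exact_mod_cast hle)
end

section
/- Let n : ℕ, let I ∈ Matrix (Fin n) (Fin n) ℤ be symmetric and negative definite, and let K : Fin n → ℤ be such that for every V : Fin n → ℤ, (K + 2 • I.mulVec V) ⬝ᵥ I⁻¹.mulVec (K + 2 • I.mulVec V) ≤ K ⬝ᵥ I⁻¹.mulVec K (computations in ℚ with the rational inverse I⁻¹). Then for every V : Fin n → ℤ, K ⬝ᵥ V + V ⬝ᵥ I.mulVec V ≤ 0. -/
open Matrix

/-- If `K` maximizes the square `K ⬝ᵥ I⁻¹.mulVec K` in its orbit `K + 2 I ℤⁿ` for a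
symmetric negative definite integer matrix `I`, then `⟨K, V⟩ + V · V ≤ 0` for every
integer vector `V`. -/
theorem pairing_add_self_intersection_nonpos (n : ℕ) (I : Matrix (Fin n) (Fin n) ℤ)
    (hI : I.IsSymm)
    (hneg : ∀ v : Fin n → ℚ, v ≠ 0 → v ⬝ᵥ (I.map ((↑) : ℤ → ℚ)).mulVec v < 0)
    (K : Fin n → ℤ)
    (hmax : ∀ V : Fin n → ℤ,
      (fun i => (((K + 2 • I.mulVec V) i : ℤ) : ℚ)) ⬝ᵥ
          (I.map ((↑) : ℤ → ℚ))⁻¹.mulVec (fun i => (((K + 2 • I.mulVec V) i : ℤ) : ℚ))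
        ≤ (fun i => ((K i : ℤ) : ℚ)) ⬝ᵥ
          (I.map ((↑) : ℤ → ℚ))⁻¹.mulVec (fun i => ((K i : ℤ) : ℚ))) :
    ∀ V : Fin n → ℤ, K ⬝ᵥ V + V ⬝ᵥ I.mulVec V ≤ 0 := by
  intro V
  set A : Matrix (Fin n) (Fin n) ℚ := I.map ((↑) : ℤ → ℚ) with hA
  have hAsymm : Aᵀ = A := by
    ext i j
    simp [hA, Matrix.transpose_apply, Matrix.map_apply]
    exact_mod_cast congrFun (congrFun hI i) j
  -- invertibility
  have hdet : A.det ≠ 0 := by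
    intro h
    obtain ⟨v, hv, hAv⟩ := (Matrix.exists_mulVec_eq_zero_iff).mpr h
    have := hneg v hv
    rw [hAv, dotProduct_zero] at this
    exact lt_irrefl 0 this
  have hunit : IsUnit A.det := isUnit_iff_ne_zero.mpr hdet
  have hAinvA : A⁻¹ * A = 1 := Matrix.nonsing_inv_mul A hunit
  have hAAinv : A * A⁻¹ = 1 := Matrix.mul_nonsing_inv A hunit
  set Kq : Fin n → ℚ := fun i => ((K i : ℤ) : ℚ) with hKq
  set Vq : Fin n → ℚ := fun i => ((V i : ℤ) : ℚ) with hVq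
  -- cast of the shifted vector
  have hcast : (fun i => (((K + 2 • I.mulVec V) i : ℤ) : ℚ)) = Kq + (2:ℚ) • A.mulVec Vq := by
    funext i
    have h2 : (K + 2 • I.mulVec V) i = K i + 2 * ∑ j, I i j * V j := by
      simp [Matrix.mulVec, dotProduct, two_smul, two_mul]
    rw [h2, Int.cast_add, Int.cast_mul, Int.cast_sum]
    simp only [Pi.add_apply, Pi.smul_apply, smul_eq_mul, hKq, hVq, hA,
      Matrix.mulVec, dotProduct, Matrix.map_apply]
    push_cast
    ring
  have hmaxV := hmax V
  rw [hcast] at hmaxV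
  have hinvAV : A⁻¹.mulVec (A.mulVec Vq) = Vq := by
    rw [Matrix.mulVec_mulVec, hAinvA, Matrix.one_mulVec]
  have hAInvK : A.mulVec (A⁻¹.mulVec Kq) = Kq := by
    rw [Matrix.mulVec_mulVec, hAAinv, Matrix.one_mulVec]
  -- expand
  have hcross : (A.mulVec Vq) ⬝ᵥ A⁻¹.mulVec Kq = Vq ⬝ᵥ Kq := by
    rw [dotProduct_comm, Matrix.dotProduct_mulVec, ← Matrix.mulVec_transpose,
      hAsymm, hAInvK, dotProduct_comm]
  have hexp : (Kq + (2:ℚ) • A.mulVec Vq) ⬝ᵥ A⁻¹.mulVec (Kq + (2:ℚ) • A.mulVec Vq)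
      = Kq ⬝ᵥ A⁻¹.mulVec Kq + 4 * (Kq ⬝ᵥ Vq + Vq ⬝ᵥ A.mulVec Vq) := by
    simp only [Matrix.mulVec_add, Matrix.mulVec_smul, add_dotProduct,
      dotProduct_add, smul_dotProduct, dotProduct_smul, smul_eq_mul]
    rw [hinvAV, hcross]
    have hKV : Kq ⬝ᵥ Vq = Vq ⬝ᵥ Kq := dotProduct_comm _ _
    rw [hKV, dotProduct_comm (A.mulVec Vq) Vq]
    ring
  rw [hexp] at hmaxV
  have h4 : 4 * (Kq ⬝ᵥ Vq + Vq ⬝ᵥ A.mulVec Vq) ≤ 0 := by linarith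
  have hq : Kq ⬝ᵥ Vq + Vq ⬝ᵥ A.mulVec Vq ≤ 0 := by linarith
  -- descend to ℤ
  have hcast2 : ((K ⬝ᵥ V + V ⬝ᵥ I.mulVec V : ℤ) : ℚ) = Kq ⬝ᵥ Vq + Vq ⬝ᵥ A.mulVec Vq := by
    simp only [dotProduct, Matrix.mulVec, hKq, hVq, hA, Matrix.map_apply]
    push_cast
    ring
  have := hcast2 ▸ hq
  exact_mod_cast this
end

section
/- Let n : ℕ, let I ∈ Matrix (Fin n) (Fin n) ℤ be symmetric with det I ≠ 0, and let K : Fin n → ℤ. Suppose j : Fin n satisfies K j = -(I j j). Then, setting K' = K + 2 • I.mulVec (Pi.single j 1), one has K' ⬝ᵥ I⁻¹.mulVec K' = K ⬝ᵥ I⁻¹.mulVec K, where I⁻¹ is the rational inverse of I and the computation takes place in ℚ. -/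
/-! Expanding the square of `K + I (2 e_j)` and cancelling `I⁻¹ I = 1`, the square changes by
`4 K_j + 4 I_jj`, which vanishes exactly under the full-path condition `K_j = -I_jj`. -/

open Matrix

namespace Matrix

variable {m R : Type*} [Fintype m] [CommRing R]

theorem IsSymm.mulVec_dotProduct_comm {A : Matrix m m R} (hA : A.IsSymm) (v w : m → R) :
    A *ᵥ v ⬝ᵥ w = v ⬝ᵥ A *ᵥ w := by
  rw [dotProduct_mulVec, ← vecMul_transpose, hA.eq]

theorem IsSymm.dotProduct_inv_mulVec_add_mulVec [DecidableEq m] {A : Matrix m m R}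
    (hA : A.IsSymm) (hdet : IsUnit A.det) (x v : m → R) :
    (x + A *ᵥ v) ⬝ᵥ A⁻¹ *ᵥ (x + A *ᵥ v)
      = x ⬝ᵥ A⁻¹ *ᵥ x + 2 * (x ⬝ᵥ v) + v ⬝ᵥ A *ᵥ v := by
  have hcancel : A⁻¹ *ᵥ A *ᵥ v = v := by
    rw [mulVec_mulVec, nonsing_inv_mul A hdet, one_mulVec]
  have hcross : A *ᵥ v ⬝ᵥ A⁻¹ *ᵥ x = x ⬝ᵥ v := by
    rw [hA.mulVec_dotProduct_comm, mulVec_mulVec, mul_nonsing_inv A hdet, one_mulVec,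
      dotProduct_comm]
  rw [mulVec_add, hcancel, add_dotProduct, dotProduct_add, dotProduct_add, hcross,
    hA.mulVec_dotProduct_comm]
  ring

end Matrix

/-- The full-path step preserves the square: if `K j = -(I j j)`, then
`K' = K + 2 • I.mulVec (Pi.single j 1)` has the same square as `K`, where squares are
computed in `ℚ` with the rational inverse of the symmetric matrix `I` with `det I ≠ 0`. -/
theorem square_invariant_full_path_step (n : ℕ) (I : Matrix (Fin n) (Fin n) ℤ)
    (hI : I.IsSymm) (hdet : I.det ≠ 0) (K : Fin n → ℤ) (j : Fin n)
    (hj : K j = -(I j j)) :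
    (fun i => (((K + 2 • I.mulVec (Pi.single j 1)) i : ℤ) : ℚ)) ⬝ᵥ
        (I.map ((↑) : ℤ → ℚ))⁻¹.mulVec
          (fun i => (((K + 2 • I.mulVec (Pi.single j 1)) i : ℤ) : ℚ))
      = (fun i => ((K i : ℤ) : ℚ)) ⬝ᵥ
        (I.map ((↑) : ℤ → ℚ))⁻¹.mulVec (fun i => ((K i : ℤ) : ℚ)) := by
  set A : Matrix (Fin n) (Fin n) ℚ := I.map (↑)
  have hA : A.IsSymm := hI.map _
  have hdetA : IsUnit A.det := by
    rw [show A.det = I.det from (RingHom.map_det (Int.castRingHom ℚ) I).symm]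
    exact isUnit_iff_ne_zero.mpr (Int.cast_ne_zero.mpr hdet)
  have hstep : (fun i => (((K + 2 • I *ᵥ Pi.single j 1) i : ℤ) : ℚ))
      = (fun i => (K i : ℚ)) + A *ᵥ Pi.single j 2 := by
    ext i
    simp [A, mulVec_single, mul_comm]
  rw [hstep, hA.dotProduct_inv_mulVec_add_mulVec hdetA, mulVec_single]
  simp [A, hj]
  ring
end

section
/- Let p be an integer with p ≥ 3. Define the symmetric matrix M ∈ Matrix (Fin p) (Fin p) ℤ by: M 0 0 = -1, M 0 1 = M 1 0 = -2, M 0 2 = M 2 0 = 1, M 1 1 = -(p+2), M i i = -2 for 2 ≤ i ≤ p-1, M i (i+1) = M (i+1) i = 1 for 1 ≤ i ≤ p-2, and all other entries 0. Define x : Fin p → ℤ by x 0 = -p, x 1 = 1, and x j = j - p for 2 ≤ j ≤ p-1. Then M.mulVec x = 0, and moreover every y : Fin p → ℚ with (M.map (Int.cast)).mulVec y = 0 is a rational scalar multiple of x (so x generates the kernel of M). -/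
open Matrix

section Rows
variable {p : ℕ} {R : Type*} [CommRing R] {N : Matrix (Fin p) (Fin p) R}

def HN (N : Matrix (Fin p) (Fin p) R) : Prop :=
  ∀ i j : Fin p, N i j =
      if i = j then (if i.val = 0 then -1 else if i.val = 1 then -((p : R) + 2) else -2)
      else if (i.val = 0 ∧ j.val = 1) ∨ (i.val = 1 ∧ j.val = 0) then -2
      else if (i.val = 0 ∧ j.val = 2) ∨ (i.val = 2 ∧ j.val = 0) then 1
      else if (j.val = i.val + 1 ∨ i.val = j.val + 1) then 1
      else 0

lemma sumSupp {s : Finset (Fin p)} {g : Fin p → R} (h : ∀ j ∉ s, g j = 0) :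
    ∑ j, g j = ∑ j ∈ s, g j :=
  (Finset.sum_subset s.subset_univ (fun x _ hx => h x hx)).symm

lemma entry (hN : HN N) (a b : ℕ) (ha : a < p) (hb : b < p) :
    N ⟨a, ha⟩ ⟨b, hb⟩ =
      if a = b then (if a = 0 then -1 else if a = 1 then -((p : R) + 2) else -2)
      else if (a = 0 ∧ b = 1) ∨ (a = 1 ∧ b = 0) then -2
      else if (a = 0 ∧ b = 2) ∨ (a = 2 ∧ b = 0) then 1
      else if (b = a + 1 ∨ a = b + 1) then 1
      else 0 := by
  rw [hN]
  simp only [Fin.mk.injEq]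

lemma entry_diag0 (hN : HN N) (h : 0 < p) : N ⟨0, h⟩ ⟨0, h⟩ = -1 := by
  rw [entry hN, if_pos rfl, if_pos rfl]

lemma entry_diag1 (hN : HN N) (h : 1 < p) : N ⟨1, h⟩ ⟨1, h⟩ = -((p : R) + 2) := by
  rw [entry hN, if_pos rfl, if_neg (by omega), if_pos rfl]

lemma entry_diag (hN : HN N) (a : ℕ) (h2 : 2 ≤ a) (h : a < p) : N ⟨a, h⟩ ⟨a, h⟩ = -2 := by
  rw [entry hN, if_pos rfl, if_neg (by omega), if_neg (by omega)]

lemma entry01 (hN : HN N) (h0 : 0 < p) (h1 : 1 < p) : N ⟨0, h0⟩ ⟨1, h1⟩ = -2 := by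
  rw [entry hN, if_neg (by omega), if_pos (by omega)]

lemma entry10 (hN : HN N) (h1 : 1 < p) (h0 : 0 < p) : N ⟨1, h1⟩ ⟨0, h0⟩ = -2 := by
  rw [entry hN, if_neg (by omega), if_pos (by omega)]

lemma entry02 (hN : HN N) (h0 : 0 < p) (h2 : 2 < p) : N ⟨0, h0⟩ ⟨2, h2⟩ = 1 := by
  rw [entry hN, if_neg (by omega), if_neg (by omega), if_pos (by omega)]

lemma entry20 (hN : HN N) (h2 : 2 < p) (h0 : 0 < p) : N ⟨2, h2⟩ ⟨0, h0⟩ = 1 := by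
  rw [entry hN, if_neg (by omega), if_neg (by omega), if_pos (by omega)]

lemma entry_adj (hN : HN N) (a b : ℕ) (ha : a < p) (hb : b < p)
    (hadj : b = a + 1 ∨ a = b + 1) (hs : 3 ≤ a + b) : N ⟨a, ha⟩ ⟨b, hb⟩ = 1 := by
  rw [entry hN, if_neg (by omega), if_neg (by omega), if_neg (by omega), if_pos (by omega)]

lemma entry_zero (hN : HN N) (a : ℕ) (ha : a < p) (j : Fin p)
    (h1 : j.val ≠ a) (h2 : j.val + 1 ≠ a) (h3 : j.val ≠ a + 1)
    (h4 : ¬(a = 0 ∧ j.val = 1)) (h5 : ¬(a = 1 ∧ j.val = 0))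
    (h6 : ¬(a = 0 ∧ j.val = 2)) (h7 : ¬(a = 2 ∧ j.val = 0)) :
    N ⟨a, ha⟩ j = 0 := by
  rw [hN, if_neg (by simp only [Fin.ext_iff]; omega), if_neg (by simp only [Fin.ext_iff]; omega),
    if_neg (by simp only [Fin.ext_iff]; omega), if_neg (by simp only [Fin.ext_iff]; omega)]

lemma row0 (hp : 3 ≤ p) (hN : HN N) (v : Fin p → R) :
    ∑ j, N ⟨0, by omega⟩ j * v j =
      -v ⟨0, by omega⟩ - 2 * v ⟨1, by omega⟩ + v ⟨2, by omega⟩ := by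
  rw [sumSupp (s := {⟨0, by omega⟩, ⟨1, by omega⟩, ⟨2, by omega⟩})]
  · rw [Finset.sum_insert (by simp [Fin.ext_iff]),
      Finset.sum_insert (by simp [Fin.ext_iff]), Finset.sum_singleton,
      entry_diag0 hN, entry01 hN, entry02 hN]
    ring
  · intro j hj
    simp only [Finset.mem_insert, Finset.mem_singleton, Fin.ext_iff] at hj
    push_neg at hj
    rw [entry_zero hN 0 (by omega) j (by omega) (by omega) (by omega)
      (by omega) (by omega) (by omega) (by omega), zero_mul]

lemma row1 (hp : 3 ≤ p) (hN : HN N) (v : Fin p → R) :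
    ∑ j, N ⟨1, by omega⟩ j * v j =
      -2 * v ⟨0, by omega⟩ - ((p : R) + 2) * v ⟨1, by omega⟩ + v ⟨2, by omega⟩ := by
  rw [sumSupp (s := {⟨0, by omega⟩, ⟨1, by omega⟩, ⟨2, by omega⟩})]
  · rw [Finset.sum_insert (by simp [Fin.ext_iff]),
      Finset.sum_insert (by simp [Fin.ext_iff]), Finset.sum_singleton,
      entry10 hN, entry_diag1 hN, entry_adj hN 1 2 (by omega) (by omega) (by omega) (by omega)]
    ring
  · intro j hj
    simp only [Finset.mem_insert, Finset.mem_singleton, Fin.ext_iff] at hj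
    push_neg at hj
    rw [entry_zero hN 1 (by omega) j (by omega) (by omega) (by omega)
      (by omega) (by omega) (by omega) (by omega), zero_mul]

lemma row2 (hp : 4 ≤ p) (hN : HN N) (v : Fin p → R) :
    ∑ j, N ⟨2, by omega⟩ j * v j =
      v ⟨0, by omega⟩ + v ⟨1, by omega⟩ - 2 * v ⟨2, by omega⟩ + v ⟨3, by omega⟩ := by
  rw [sumSupp (s := {⟨0, by omega⟩, ⟨1, by omega⟩, ⟨2, by omega⟩, ⟨3, by omega⟩})]
  · rw [Finset.sum_insert (by simp [Fin.ext_iff]),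
      Finset.sum_insert (by simp [Fin.ext_iff]),
      Finset.sum_insert (by simp [Fin.ext_iff]), Finset.sum_singleton,
      entry20 hN, entry_adj hN 2 1 (by omega) (by omega) (by omega) (by omega),
      entry_diag hN 2 (by omega) (by omega),
      entry_adj hN 2 3 (by omega) (by omega) (by omega) (by omega)]
    ring
  · intro j hj
    simp only [Finset.mem_insert, Finset.mem_singleton, Fin.ext_iff] at hj
    push_neg at hj
    rw [entry_zero hN 2 (by omega) j (by omega) (by omega) (by omega)
      (by omega) (by omega) (by omega) (by omega), zero_mul]

lemma row2p3 (hp : p = 3) (hN : HN N) (v : Fin p → R) :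
    ∑ j, N ⟨2, by omega⟩ j * v j =
      v ⟨0, by omega⟩ + v ⟨1, by omega⟩ - 2 * v ⟨2, by omega⟩ := by
  rw [sumSupp (s := {⟨0, by omega⟩, ⟨1, by omega⟩, ⟨2, by omega⟩})]
  · rw [Finset.sum_insert (by simp [Fin.ext_iff]),
      Finset.sum_insert (by simp [Fin.ext_iff]), Finset.sum_singleton,
      entry20 hN, entry_adj hN 2 1 (by omega) (by omega) (by omega) (by omega),
      entry_diag hN 2 (by omega) (by omega)]
    ring
  · intro j hj
    simp only [Finset.mem_insert, Finset.mem_singleton, Fin.ext_iff] at hj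
    push_neg at hj
    exact absurd j.isLt (by omega)

lemma rowMid (hp : 3 ≤ p) (hN : HN N) (v : Fin p → R) (i : ℕ) (h3 : 3 ≤ i) (hi : i ≤ p - 2) :
    ∑ j, N ⟨i, by omega⟩ j * v j =
      v ⟨i - 1, by omega⟩ - 2 * v ⟨i, by omega⟩ + v ⟨i + 1, by omega⟩ := by
  rw [sumSupp (s := {⟨i - 1, by omega⟩, ⟨i, by omega⟩, ⟨i + 1, by omega⟩})]
  · rw [Finset.sum_insert (by simp only [Finset.mem_insert, Finset.mem_singleton, Fin.ext_iff]; omega),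
      Finset.sum_insert (by simp only [Finset.mem_singleton, Fin.ext_iff]; omega),
      Finset.sum_singleton,
      entry_adj hN i (i - 1) (by omega) (by omega) (by omega) (by omega),
      entry_diag hN i (by omega) (by omega),
      entry_adj hN i (i + 1) (by omega) (by omega) (by omega) (by omega)]
    ring
  · intro j hj
    simp only [Finset.mem_insert, Finset.mem_singleton, Fin.ext_iff] at hj
    push_neg at hj
    rw [entry_zero hN i (by omega) j (by omega) (by omega) (by omega)
      (by omega) (by omega) (by omega) (by omega), zero_mul]

lemma rowLast (hp : 4 ≤ p) (hN : HN N) (v : Fin p → R) :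
    ∑ j, N ⟨p - 1, by omega⟩ j * v j =
      v ⟨p - 2, by omega⟩ - 2 * v ⟨p - 1, by omega⟩ := by
  rw [sumSupp (s := {⟨p - 2, by omega⟩, ⟨p - 1, by omega⟩})]
  · rw [Finset.sum_insert (by simp only [Finset.mem_singleton, Fin.ext_iff]; omega),
      Finset.sum_singleton,
      entry_adj hN (p - 1) (p - 2) (by omega) (by omega) (by omega) (by omega),
      entry_diag hN (p - 1) (by omega) (by omega)]
    ring
  · intro j hj
    simp only [Finset.mem_insert, Finset.mem_singleton, Fin.ext_iff] at hj
    push_neg at hj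
    rw [entry_zero hN (p - 1) (by omega) j (by omega) (by omega) (by omega)
      (by omega) (by omega) (by omega) (by omega), zero_mul]

end Rows



set_option maxHeartbeats 1000000

/-- For `p ≥ 3`, the intersection form `M` of the Fintushel–Stern configuration `C_{p,1}`
together with the extra handle converting it into a rational homology ball has kernel
generated by the vector `x = (-p, 1, 2 - p, 3 - p, ..., -2, -1)`: here `M 0 0 = -1`,
`M 0 1 = M 1 0 = -2`, `M 0 2 = M 2 0 = 1`, `M 1 1 = -(p+2)`, `M i i = -2` for
`2 ≤ i ≤ p - 1`, `M i (i+1) = M (i+1) i = 1` for `1 ≤ i ≤ p - 2`, and all other entries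
vanish, while `x 0 = -p`, `x 1 = 1`, `x j = j - p` for `2 ≤ j ≤ p - 1`. -/
theorem kernel_of_rational_ball_intersection_form (p : ℕ) (hp : 3 ≤ p)
    (M : Matrix (Fin p) (Fin p) ℤ)
    (hM : ∀ i j : Fin p, M i j =
      if i = j then (if i.val = 0 then -1 else if i.val = 1 then -((p : ℤ) + 2) else -2)
      else if (i.val = 0 ∧ j.val = 1) ∨ (i.val = 1 ∧ j.val = 0) then -2
      else if (i.val = 0 ∧ j.val = 2) ∨ (i.val = 2 ∧ j.val = 0) then 1
      else if (j.val = i.val + 1 ∨ i.val = j.val + 1) then 1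
      else 0)
    (x : Fin p → ℤ)
    (hx : ∀ j : Fin p, x j =
      if j.val = 0 then -(p : ℤ) else if j.val = 1 then 1 else (j.val : ℤ) - (p : ℤ)) :
    M.mulVec x = 0 ∧
      ∀ y : Fin p → ℚ, (M.map ((↑) : ℤ → ℚ)).mulVec y = 0 →
        ∃ c : ℚ, y = c • fun i => ((x i : ℤ) : ℚ) := by
  have hNM : HN M := hM
  have xval : ∀ (a : ℕ) (ha : a < p),
      x ⟨a, ha⟩ = if a = 0 then -(p : ℤ) else if a = 1 then 1 else (a : ℤ) - p := by
    intro a ha; rw [hx]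
  have x0 : x ⟨0, by omega⟩ = -(p : ℤ) := by rw [xval]; norm_num
  have x1 : x ⟨1, by omega⟩ = 1 := by rw [xval]; norm_num
  have xg : ∀ (a : ℕ) (h2 : 2 ≤ a) (ha : a < p), x ⟨a, ha⟩ = (a : ℤ) - p := by
    intro a h2 ha; rw [xval, if_neg (by omega), if_neg (by omega)]
  constructor
  · funext i
    obtain ⟨iv, hiv⟩ := i
    show ∑ j, M ⟨iv, hiv⟩ j * x j = 0
    by_cases h0 : iv = 0
    · subst h0
      rw [row0 hp hNM x]
      simp only [x0, x1, xg 2 (by omega) (by omega)]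
      push_cast; ring
    by_cases h1 : iv = 1
    · subst h1
      rw [row1 hp hNM x]
      simp only [x0, x1, xg 2 (by omega) (by omega)]
      push_cast; ring
    by_cases h2 : iv = 2
    · subst h2
      by_cases hp3 : p = 3
      · rw [row2p3 hp3 hNM x]
        simp only [x0, x1, xg 2 (by omega) (by omega)]
        subst hp3; norm_num
      · rw [row2 (by omega) hNM x]
        simp only [x0, x1, xg 2 (by omega) (by omega), xg 3 (by omega) (by omega)]
        push_cast; ring
    by_cases hl : iv = p - 1
    · subst hl
      rw [rowLast (by omega) hNM x]
      simp only [xg (p - 2) (by omega) (by omega), xg (p - 1) (by omega) (by omega)]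
      omega
    · rw [rowMid hp hNM x iv (by omega) (by omega)]
      simp only [xg (iv - 1) (by omega) (by omega), xg iv (by omega) (by omega),
        xg (iv + 1) (by omega) (by omega)]
      omega
  · intro y hy
    have hN' : HN (M.map ((↑) : ℤ → ℚ)) := by
      intro i j
      rw [Matrix.map_apply, hM]
      split_ifs <;> push_cast <;> ring
    have hrow : ∀ (a : ℕ) (ha : a < p),
        ∑ j, (M.map ((↑) : ℤ → ℚ)) ⟨a, ha⟩ j * y j = 0 := by
      intro a ha
      simpa [Matrix.mulVec, dotProduct] using congrFun hy ⟨a, ha⟩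
    have e0 := hrow 0 (by omega)
    rw [row0 hp hN' y] at e0
    have e1 := hrow 1 (by omega)
    rw [row1 hp hN' y] at e1
    set c : ℚ := y ⟨1, by omega⟩ with hc
    have hy0 : y ⟨0, by omega⟩ = -(p : ℚ) * c := by linear_combination e0 - e1
    have hy2 : y ⟨2, by omega⟩ = ((2 : ℚ) - p) * c := by linear_combination e0 + hy0
    have key : ∀ (n : ℕ) (hn : n < p),
        y ⟨n, hn⟩ = (if n = 0 then -(p : ℚ) else if n = 1 then 1 else (n : ℚ) - p) * c := by
      intro n
      induction n using Nat.strong_induction_on with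
      | _ n ih =>
        intro hn
        by_cases h0 : n = 0
        · subst h0; rw [if_pos rfl]; exact hy0
        by_cases h1 : n = 1
        · subst h1; rw [if_neg (by omega), if_pos rfl, one_mul]
        by_cases h2 : n = 2
        · subst h2
          rw [if_neg (by omega), if_neg (by omega)]
          push_cast
          exact hy2
        by_cases h3 : n = 3
        · subst h3
          have hp4 : 4 ≤ p := by omega
          have e2 := hrow 2 (by omega)
          rw [row2 hp4 hN' y] at e2
          rw [if_neg (by omega), if_neg (by omega)]
          push_cast
          linear_combination e2 - hy0 + 2 * hy2
        · -- n ≥ 4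
          obtain ⟨m, rfl⟩ : ∃ m, n = m + 4 := ⟨n - 4, by omega⟩
          have e := hrow (m + 3) (by omega)
          rw [rowMid hp hN' y (m + 3) (by omega) (by omega)] at e
          simp only [show m + 3 - 1 = m + 2 from by omega,
            show m + 3 + 1 = m + 4 from by omega] at e
          have ih1 := ih (m + 3) (by omega) (by omega)
          have ih2 := ih (m + 2) (by omega) (by omega)
          rw [if_neg (by omega), if_neg (by omega)] at ih1 ih2 ⊢
          push_cast at ih1 ih2 ⊢
          linear_combination e + 2 * ih1 - ih2
    refine ⟨c, ?_⟩
    funext i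
    obtain ⟨n, hn⟩ := i
    rw [key n hn]
    simp only [Pi.smul_apply, smul_eq_mul]
    rw [hx]
    push_cast
    split_ifs <;> ring
end

section
/- Let I = !![-3, 1, 0; 1, -5, 1; 0, 1, -2] ∈ Matrix (Fin 3) (Fin 3) ℤ. Consider the set S of vectors K : Fin 3 → ℤ with K 0 ∈ {-1, 1, 3}, K 1 ∈ {-3, -1, 1, 3, 5}, and K 2 ∈ {0, 2}. Then S has exactly 30 elements, and exactly five elements K of S satisfy K ⬝ᵥ I⁻¹.mulVec K = -3 (computed in ℚ with the rational inverse I⁻¹), namely (1,3,0), (-1,-3,0), (3,-1,0), (-1,1,2), and (1,-3,2). -/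
open Matrix

/-!
Over `ℚ` the inverse of `I` is `adj I / det I` with `det I = -25`, so `K² = -3` exactly when the
integral quadratic form `K ⬝ᵥ adj I *ᵥ K` equals `75`. That condition is then checked on each of
the `3 · 5 · 2 = 30` vectors of the box.
-/

theorem dotProduct_inv_map_mulVec {n R K : Type*} [Fintype n] [DecidableEq n] [CommRing R]
    [Field K] (f : R →+* K) (M : Matrix n n R) (v : n → R) :
    (f ∘ v) ⬝ᵥ (M.map f)⁻¹ *ᵥ (f ∘ v) = f (v ⬝ᵥ M.adjugate *ᵥ v) / f M.det := by
  have hadj : M.adjugate.map f = (M.map f).adjugate := f.map_adjugate M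
  have hmul : f ∘ (M.adjugate *ᵥ v) = (M.map f).adjugate *ᵥ (f ∘ v) := by
    ext i
    rw [← hadj]
    exact f.map_mulVec _ v i
  rw [inv_def, Ring.inverse_eq_inv', smul_mulVec, dotProduct_smul, f.map_dotProduct, hmul,
    f.map_det, smul_eq_mul, div_eq_inv_mul]
  rfl

def c53Form : Matrix (Fin 3) (Fin 3) ℤ := !![-3, 1, 0; 1, -5, 1; 0, 1, -2]

theorem det_c53Form : c53Form.det = -25 := by
  simp [c53Form, det_fin_three]

theorem adjugate_c53Form : c53Form.adjugate = !![9, 2, 1; 2, 6, 3; 1, 3, 14] := by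
  ext i j
  fin_cases i <;> fin_cases j <;> simp [c53Form, adjugate_fin_three]

theorem c53_square_eq_neg_three_iff (K : Fin 3 → ℤ) :
    (fun i => ((K i : ℤ) : ℚ)) ⬝ᵥ (c53Form.map ((↑) : ℤ → ℚ))⁻¹ *ᵥ (fun i => ((K i : ℤ) : ℚ))
        = -3 ↔ K ⬝ᵥ c53Form.adjugate *ᵥ K = 75 := by
  have h := dotProduct_inv_map_mulVec (Int.castRingHom ℚ) c53Form K
  rw [det_c53Form] at h
  change (Int.castRingHom ℚ ∘ K) ⬝ᵥ (c53Form.map (Int.castRingHom ℚ))⁻¹ *ᵥ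
    (Int.castRingHom ℚ ∘ K) = -3 ↔ _
  rw [h, div_eq_iff (by norm_num), eq_intCast, eq_intCast]
  norm_num
  norm_cast

def c53Box : Finset (Fin 3 → ℤ) := Fintype.piFinset ![{-1, 1, 3}, {-3, -1, 1, 3, 5}, {0, 2}]

theorem coe_c53Box : (c53Box : Set (Fin 3 → ℤ)) =
    {K | K 0 ∈ ({-1, 1, 3} : Set ℤ) ∧ K 1 ∈ ({-3, -1, 1, 3, 5} : Set ℤ) ∧
      K 2 ∈ ({0, 2} : Set ℤ)} := by
  ext K
  simp [c53Box, Fin.forall_fin_succ]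

theorem card_c53Box : c53Box.card = 30 := by
  simp [c53Box, Fintype.card_piFinset, Fin.prod_univ_three]

theorem filter_c53Box :
    c53Box.filter (fun K => K ⬝ᵥ c53Form.adjugate *ᵥ K = 75) =
      {![1, 3, 0], ![-1, -3, 0], ![3, -1, 0], ![-1, 1, 2], ![1, -3, 2]} := by
  rw [adjugate_c53Form]
  decide

/-- For the intersection form `I` of the plumbing `C_{5,3}` with weights `-3, -5, -2`,
the box of characteristic covectors `K` with `K 0 ∈ {-1,1,3}`, `K 1 ∈ {-3,-1,1,3,5}`,
`K 2 ∈ {0,2}` has exactly `30` elements, and exactly five of them have square `-3`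
(computed in `ℚ` with the rational inverse of `I`), namely `(1,3,0)`, `(-1,-3,0)`,
`(3,-1,0)`, `(-1,1,2)`, and `(1,-3,2)`. -/
theorem c53_characteristic_vectors :
    let I : Matrix (Fin 3) (Fin 3) ℤ := !![-3, 1, 0; 1, -5, 1; 0, 1, -2]
    let S : Set (Fin 3 → ℤ) :=
      {K | K 0 ∈ ({-1, 1, 3} : Set ℤ) ∧ K 1 ∈ ({-3, -1, 1, 3, 5} : Set ℤ) ∧
        K 2 ∈ ({0, 2} : Set ℤ)}
    S.ncard = 30 ∧
      {K ∈ S | (fun i => ((K i : ℤ) : ℚ)) ⬝ᵥ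
          (I.map ((↑) : ℤ → ℚ))⁻¹.mulVec (fun i => ((K i : ℤ) : ℚ)) = -3}
        = ({![1, 3, 0], ![-1, -3, 0], ![3, -1, 0], ![-1, 1, 2], ![1, -3, 2]} :
            Set (Fin 3 → ℤ)) := by
  intro I S
  have hI : I = c53Form := rfl
  have hS : S = c53Box := coe_c53Box.symm
  refine ⟨by rw [hS, Set.ncard_coe_finset, card_c53Box], ?_⟩
  rw [hS, hI]
  ext K
  rw [Set.mem_sep_iff, Finset.mem_coe, c53_square_eq_neg_three_iff]
  simpa using Finset.ext_iff.mp filter_c53Box K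
end

section
/- Let P = !![-4, 1, 1, 1; 1, -3, 0, 0; 1, 0, -3, 0; 1, 0, 0, -3] ∈ Matrix (Fin 4) (Fin 4) ℤ. Each of the nine vectors K ∈ {(2,1,1,1), (-2,-1,-1,-1), (-2,3,1,-1), (0,1,3,-1), (4,-1,-1,-1), (-2,1,-1,3), (0,3,-1,1), (-2,-1,3,1), (0,-1,1,3)} satisfies all of: (i) K 0 ∈ {-2, 0, 2, 4} and K i ∈ {-1, 1, 3} for i = 1, 2, 3; (ii) 9 divides 3*(K 0) - 2*(K 1) + 4*(K 2) + (K 3); and (iii) K ⬝ᵥ P⁻¹.mulVec K = -4, computed in ℚ with the rational inverse P⁻¹. -/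
/-!
Multiplying `P` by an explicit integer matrix `M` gives `P * M = 27 • 1`, so `P⁻¹ = M / 27` over `ℚ`
and the rational square `K ⬝ᵥ P⁻¹ K` equals `(K ⬝ᵥ M K) / 27`. Condition (iii) thus becomes the integer
identity `K ⬝ᵥ M K = -108`, and all three conditions are finite integer computations on each of the
nine vectors.
-/

open Matrix

section IntCast

variable {n : Type*} [Fintype n]

theorem Matrix.intCast_dotProduct_map_mulVec {R : Type*} [NonAssocRing R] (N : Matrix n n ℤ)
    (K : n → ℤ) :
    (fun i => (K i : R)) ⬝ᵥ N.map ((↑) : ℤ → R) *ᵥ (fun i => (K i : R)) =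
      ((K ⬝ᵥ N *ᵥ K : ℤ) : R) := by
  rw [← eq_intCast (Int.castRingHom R), RingHom.map_dotProduct]
  congr 1
  funext i
  exact ((Int.castRingHom R).map_mulVec N K i).symm

variable [DecidableEq n] {𝕜 : Type*} [Field 𝕜] [CharZero 𝕜]

theorem Matrix.inv_map_intCast_of_mul_eq_smul_one {P N : Matrix n n ℤ} {c : ℤ} (hc : c ≠ 0)
    (hPN : P * N = c • 1) :
    (P.map ((↑) : ℤ → 𝕜))⁻¹ = (c : 𝕜)⁻¹ • N.map ((↑) : ℤ → 𝕜) := by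
  have hPN' : P.map ((↑) : ℤ → 𝕜) * N.map (↑) = (c : 𝕜) • 1 := by
    have := congr_arg (Matrix.map · (Int.castRingHom 𝕜)) hPN
    rwa [Matrix.map_mul, smul_one_eq_diagonal, diagonal_map (map_zero _),
      ← smul_one_eq_diagonal] at this
  refine inv_eq_right_inv ?_
  rw [mul_smul_comm, hPN', smul_smul, inv_mul_cancel₀ (Int.cast_ne_zero.mpr hc), one_smul]

theorem Matrix.intCast_dotProduct_inv_map_mulVec {P N : Matrix n n ℤ} {c : ℤ} (hc : c ≠ 0)
    (hPN : P * N = c • 1) (K : n → ℤ) :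
    (fun i => (K i : 𝕜)) ⬝ᵥ (P.map ((↑) : ℤ → 𝕜))⁻¹ *ᵥ (fun i => (K i : 𝕜)) =
      ((K ⬝ᵥ N *ᵥ K : ℤ) : 𝕜) / c := by
  rw [inv_map_intCast_of_mul_eq_smul_one hc hPN, smul_mulVec, dotProduct_smul, smul_eq_mul,
    inv_mul_eq_div, intCast_dotProduct_map_mulVec]

end IntCast

def wahlForm : Matrix (Fin 4) (Fin 4) ℤ :=
  !![-4, 1, 1, 1; 1, -3, 0, 0; 1, 0, -3, 0; 1, 0, 0, -3]

/-- `27 • wahlForm⁻¹ = -(1/3) • adjugate wahlForm`, as `det wahlForm = 81`. -/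
def wahlFormScaledInv : Matrix (Fin 4) (Fin 4) ℤ :=
  !![-9, -3, -3, -3; -3, -10, -1, -1; -3, -1, -10, -1; -3, -1, -1, -10]

theorem wahlForm_mul_scaledInv : wahlForm * wahlFormScaledInv = (27 : ℤ) • 1 := by
  decide

/-- For the intersection form `P` of the Wahl plumbing with central weight `-4` and three
legs of weight `-3`, each of the nine listed vectors `K` satisfies the full-path box
bounds, the extension condition `9 ∣ 3 K₀ - 2 K₁ + 4 K₂ + K₃`, and has square `-4`
(computed in `ℚ` with the rational inverse of `P`). -/
theorem wahl_nine_vectors :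
    let P : Matrix (Fin 4) (Fin 4) ℤ :=
      !![-4, 1, 1, 1; 1, -3, 0, 0; 1, 0, -3, 0; 1, 0, 0, -3]
    ∀ K ∈ ({![2, 1, 1, 1], ![-2, -1, -1, -1], ![-2, 3, 1, -1], ![0, 1, 3, -1],
        ![4, -1, -1, -1], ![-2, 1, -1, 3], ![0, 3, -1, 1], ![-2, -1, 3, 1],
        ![0, -1, 1, 3]} : Set (Fin 4 → ℤ)),
      (K 0 ∈ ({-2, 0, 2, 4} : Set ℤ) ∧ K 1 ∈ ({-1, 1, 3} : Set ℤ) ∧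
        K 2 ∈ ({-1, 1, 3} : Set ℤ) ∧ K 3 ∈ ({-1, 1, 3} : Set ℤ)) ∧
      (9 : ℤ) ∣ (3 * K 0 - 2 * K 1 + 4 * K 2 + K 3) ∧
      (fun i => ((K i : ℤ) : ℚ)) ⬝ᵥ
          (P.map ((↑) : ℤ → ℚ))⁻¹.mulVec (fun i => ((K i : ℤ) : ℚ)) = -4 := by
  intro P K hK
  rw [show P = wahlForm from rfl,
    intCast_dotProduct_inv_map_mulVec (by norm_num) wahlForm_mul_scaledInv, div_eq_iff (by norm_num)]
  norm_cast
  simp only [Set.mem_insert_iff, Set.mem_singleton_iff] at hK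
  rcases hK with rfl | rfl | rfl | rfl | rfl | rfl | rfl | rfl | rfl <;> decide
end
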